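/- Let T > 0, let S : [0,T] → Set ℝⁿ have nonempty closed convex values, and suppose there exists a continuous nondecreasing φ : [0,T] → ℝ such that the Hausdorff distance satisfies d_H(S(s), S(t)) ≤ φ(t) − φ(s) for all 0 ≤ s ≤ t ≤ T. Let N_{S(t)}(x) = { y ∈ ℝⁿ : ⟨y, z − x⟩ ≤ 0 for all z ∈ S(t) } if x ∈ S(t) and N_{S(t)}(x) = ∅ otherwise. Then the map t ↦ graph N_{S(t)} is outer semicontinuous on [0,T]: whenever t_ℓ → t* in [0,T], y_ℓ ∈ N_{S(t_ℓ)}(x_ℓ), and (x_ℓ, y_ℓ) → (x, y), it holds that y ∈ N_{S(t*)}(x). -/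
import Mathlib


open Set Filter
open scoped RealInnerProductSpace

noncomputable section

abbrev Vec (n : ℕ) := EuclideanSpace ℝ (Fin n)

/-- The normal cone to the set `S` at `x` (empty when `x ∉ S`). -/
def normalCone {n : ℕ} (S : Set (Vec n)) (x : Vec n) : Set (Vec n) :=
  {y | x ∈ S ∧ ∀ z ∈ S, ⟪y, z - x⟫ ≤ 0}

theorem stmt10 {n : ℕ} (T : ℝ) (hT : 0 < T) (S : ℝ → Set (Vec n))
    (hS : ∀ t ∈ Icc (0:ℝ) T, (S t).Nonempty ∧ IsClosed (S t) ∧ Convex ℝ (S t))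
    -- `φ` continuous nondecreasing with `d_H(S(s), S(t)) ≤ φ t − φ s` for `s ≤ t`
    (φ : ℝ → ℝ) (hφc : ContinuousOn φ (Icc 0 T)) (hφmono : MonotoneOn φ (Icc 0 T))
    (hH₁ : ∀ s t : ℝ, 0 ≤ s → s ≤ t → t ≤ T →
      ∀ z ∈ S s, Metric.infDist z (S t) ≤ φ t - φ s)
    (hH₂ : ∀ s t : ℝ, 0 ≤ s → s ≤ t → t ≤ T →
      ∀ z ∈ S t, Metric.infDist z (S s) ≤ φ t - φ s) :
    -- outer semicontinuity of `t ↦ graph N_{S(t)}` on `[0,T]`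
    ∀ (ts : ℕ → ℝ) (xs ys : ℕ → Vec n) (t' : ℝ) (x' y' : Vec n),
      (∀ ℓ, ts ℓ ∈ Icc (0:ℝ) T) → t' ∈ Icc (0:ℝ) T →
      Tendsto ts atTop (nhds t') → (∀ ℓ, ys ℓ ∈ normalCone (S (ts ℓ)) (xs ℓ)) →
      Tendsto xs atTop (nhds x') → Tendsto ys atTop (nhds y') →
      y' ∈ normalCone (S t') x' := by
  intro ts xs ys t' x' y' hts ht' htt hN hx hy
  obtain ⟨hne, hcl, _⟩ := hS t' ht'
  -- d ℓ := |φ (ts ℓ) - φ t'| tends to 0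
  have hφt : Tendsto (fun ℓ => φ (ts ℓ)) atTop (nhds (φ t')) := by
    have : Tendsto ts atTop (nhdsWithin t' (Icc 0 T)) := by
      rw [tendsto_nhdsWithin_iff]
      exact ⟨htt, Eventually.of_forall hts⟩
    exact (hφc t' ht').tendsto.comp this
  have hd0 : Tendsto (fun ℓ => |φ (ts ℓ) - φ t'|) atTop (nhds 0) := by
    have h := (hφt.sub (tendsto_const_nhds (x := φ t'))).abs
    simpa using h
  -- key bound: both Hausdorff-type estimates bounded by d ℓ
  have hbd₁ : ∀ ℓ, ∀ z ∈ S (ts ℓ), Metric.infDist z (S t') ≤ |φ (ts ℓ) - φ t'| := by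
    intro ℓ z hz
    rcases le_total (ts ℓ) t' with h | h
    · calc Metric.infDist z (S t') ≤ φ t' - φ (ts ℓ) :=
            hH₁ (ts ℓ) t' (hts ℓ).1 h ht'.2 z hz
        _ ≤ |φ (ts ℓ) - φ t'| := by rw [abs_sub_comm]; exact le_abs_self _
    · calc Metric.infDist z (S t') ≤ φ (ts ℓ) - φ t' :=
            hH₂ t' (ts ℓ) ht'.1 h (hts ℓ).2 z hz
        _ ≤ |φ (ts ℓ) - φ t'| := le_abs_self _
  have hbd₂ : ∀ ℓ, ∀ z ∈ S t', Metric.infDist z (S (ts ℓ)) ≤ |φ (ts ℓ) - φ t'| := by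
    intro ℓ z hz
    rcases le_total (ts ℓ) t' with h | h
    · calc Metric.infDist z (S (ts ℓ)) ≤ φ t' - φ (ts ℓ) :=
            hH₂ (ts ℓ) t' (hts ℓ).1 h ht'.2 z hz
        _ ≤ |φ (ts ℓ) - φ t'| := by rw [abs_sub_comm]; exact le_abs_self _
    · calc Metric.infDist z (S (ts ℓ)) ≤ φ (ts ℓ) - φ t' :=
            hH₁ t' (ts ℓ) ht'.1 h (hts ℓ).2 z hz
        _ ≤ |φ (ts ℓ) - φ t'| := le_abs_self _
  -- x' ∈ S t'
  have hxmem : x' ∈ S t' := by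
    have hlim : Tendsto (fun ℓ => Metric.infDist (xs ℓ) (S t')) atTop
        (nhds (Metric.infDist x' (S t'))) :=
      (Metric.continuous_infDist_pt (S t')).continuousAt.tendsto.comp hx
    have h0 : Metric.infDist x' (S t') ≤ 0 :=
      le_of_tendsto_of_tendsto hlim hd0
        (Eventually.of_forall fun ℓ => hbd₁ ℓ (xs ℓ) (hN ℓ).1)
    have : Metric.infDist x' (S t') = 0 :=
      le_antisymm h0 (Metric.infDist_nonneg)
    exact (hcl.mem_iff_infDist_zero hne).2 this
  refine ⟨hxmem, fun z hz => ?_⟩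
  -- choose nearest points w ℓ ∈ S (ts ℓ) to z
  have hw : ∀ ℓ, ∃ w ∈ S (ts ℓ), Metric.infDist z (S (ts ℓ)) = dist z w := by
    intro ℓ
    obtain ⟨_, hclℓ, _⟩ := hS (ts ℓ) (hts ℓ)
    exact hclℓ.exists_infDist_eq_dist ⟨xs ℓ, (hN ℓ).1⟩ z
  choose w hwmem hwdist using hw
  have hwz : Tendsto w atTop (nhds z) := by
    rw [tendsto_iff_dist_tendsto_zero]
    have hle : ∀ ℓ, dist (w ℓ) z ≤ |φ (ts ℓ) - φ t'| := fun ℓ => by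
      rw [dist_comm, ← hwdist ℓ]; exact hbd₂ ℓ z hz
    exact squeeze_zero (fun ℓ => dist_nonneg) hle hd0
  have hlim : Tendsto (fun ℓ => ⟪ys ℓ, w ℓ - xs ℓ⟫) atTop (nhds ⟪y', z - x'⟫) :=
    hy.inner (hwz.sub hx)
  exact le_of_tendsto hlim
    (Eventually.of_forall fun ℓ => (hN ℓ).2 (w ℓ) (hwmem ℓ))
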